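/- For Δ > 1, the superlacunary function s(t) = Σ_{k=1}^∞ k^{−2Δ}·exp(i·2^{2^k}·t) satisfies the upper bound: there exists C₄ < ∞ such that ω[s](δ) ≤ C₄·(ln|ln δ|)^{1−2Δ} for all δ ∈ (0, e^{−e}). -/

import Mathlib

open Complex Real

/-- The superlacunary function `s(t) = Σ_{k=1}^∞ k^{-2Δ} exp(i 2^{2^k} t)`. -/
noncomputable def superlacFun (Δ : ℝ) (t : ℝ) : ℂ :=
  ∑' k : ℕ, (((k : ℝ) + 1) ^ (-(2 * Δ)) : ℝ) *
    Complex.exp (Complex.I * (2 : ℂ) ^ (2 ^ (k + 1)) * (t : ℂ))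

/-- Modulus of continuity of a complex-valued function on ℝ. -/
noncomputable def modCont (f : ℝ → ℂ) (δ : ℝ) : ℝ :=
  sSup {y : ℝ | ∃ t h : ℝ, |h| ≤ δ ∧ y = ‖f (t + h) - f t‖}

/-! Write `s(t) = Σ c_k e^{i ω_k t}` with `c_k = (k+1)^{-2Δ}`, `ω_k = 2^{2^{k+1}}`, and put
`δ = e^{-L}`. Since `|e^{iθ} - 1| ≤ min(|θ|, 2)`, splitting the series at any `N` gives
`ω[s](δ) ≤ δ Σ_{k<N} ω_k + 2 Σ_{k≥N} c_k`. Because `ω_{k+1} = ω_k²`, the head is at most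
`2 · 2^{2^N} δ`, and the integral test bounds the tail by a multiple of `(N+1)^{1-2Δ}`.
Choosing `2^N ≤ L/2 < 2^{N+1}` makes the head `O(e^{-L/2})` and gives `log L ≤ 2(N+1)`, so both
parts are `O((log L)^{1-2Δ}) = O((log |log δ|)^{1-2Δ})`. -/

noncomputable def trigSeries (c ω : ℕ → ℝ) (t : ℝ) : ℂ :=
  ∑' k, (c k : ℂ) * Complex.exp (I * ω k * t)

namespace trigSeries

variable {c ω : ℕ → ℝ}

lemma summable_terms (hc : Summable c) (t : ℝ) :
    Summable fun k ↦ (c k : ℂ) * Complex.exp (I * ω k * t) := by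
  refine hc.abs.of_norm_bounded fun k ↦ le_of_eq ?_
  rw [norm_mul, Complex.norm_real, Real.norm_eq_abs, mul_assoc, ← ofReal_mul,
    norm_exp_I_mul_ofReal, mul_one]

lemma add_sub_eq_tsum (hc : Summable c) (t h : ℝ) :
    trigSeries c ω (t + h) - trigSeries c ω t =
      ∑' k, (c k : ℂ) * Complex.exp (I * ω k * t) * (Complex.exp (I * ↑(ω k * h)) - 1) := by
  rw [trigSeries, trigSeries, ← (summable_terms hc _).tsum_sub (summable_terms hc _)]
  congr 1 with k
  have : I * ω k * ↑(t + h) = I * ω k * t + I * ↑(ω k * h) := by push_cast; ring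
  rw [this, Complex.exp_add]
  ring

lemma norm_add_sub_le (hc0 : ∀ k, 0 ≤ c k) (hc : Summable c) (t h : ℝ) (N : ℕ) :
    ‖trigSeries c ω (t + h) - trigSeries c ω t‖ ≤
      |h| * ∑ k ∈ Finset.range N, c k * |ω k| + 2 * ∑' k, c (k + N) := by
  set g : ℕ → ℝ := fun k ↦ c k * ‖Complex.exp (I * ↑(ω k * h)) - 1‖
  have hg_le_two (k : ℕ) : g k ≤ 2 * c k := by
    have : ‖Complex.exp (I * ↑(ω k * h)) - 1‖ ≤ 2 :=
      (norm_sub_le _ _).trans (by rw [norm_exp_I_mul_ofReal, norm_one]; norm_num)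
    exact (mul_le_mul_of_nonneg_left this (hc0 k)).trans_eq (mul_comm _ _)
  have hg : Summable g :=
    (hc.mul_left 2).of_nonneg_of_le (fun k ↦ mul_nonneg (hc0 k) (norm_nonneg _)) hg_le_two
  calc ‖trigSeries c ω (t + h) - trigSeries c ω t‖ ≤ ∑' k, g k := by
        rw [add_sub_eq_tsum hc]
        refine (norm_tsum_le_tsum_norm ?_).trans_eq ?_ <;>
          simp only [norm_mul, Complex.norm_real, Real.norm_eq_abs, abs_of_nonneg (hc0 _),
            ← ofReal_mul, mul_assoc, norm_exp_I_mul_ofReal, one_mul, g]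
        exact hg
    _ = ∑ k ∈ Finset.range N, g k + ∑' k, g (k + N) := (hg.sum_add_tsum_nat_add N).symm
    _ ≤ |h| * ∑ k ∈ Finset.range N, c k * |ω k| + 2 * ∑' k, c (k + N) := by
        gcongr with k
        · rw [Finset.mul_sum]
          refine Finset.sum_le_sum fun k _ ↦ ?_
          calc g k ≤ c k * ‖ω k * h‖ :=
                mul_le_mul_of_nonneg_left norm_exp_I_mul_ofReal_sub_one_le (hc0 k)
            _ = |h| * (c k * |ω k|) := by rw [Real.norm_eq_abs, abs_mul]; ring
        · rw [← tsum_mul_left]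
          exact ((summable_nat_add_iff N).mpr hg).tsum_le_tsum (fun k ↦ hg_le_two _)
            ((summable_nat_add_iff N).mpr (hc.mul_left 2))

end trigSeries

lemma sum_range_two_pow_two_pow_le (N : ℕ) :
    ∑ k ∈ Finset.range N, (2 : ℝ) ^ 2 ^ (k + 1) ≤ 2 * 2 ^ 2 ^ N := by
  induction N with
  | zero => norm_num
  | succ N ih =>
    have h2 : (2 : ℝ) ≤ 2 ^ 2 ^ N := le_self_pow₀ one_le_two (by positivity)
    have hsq : (2 : ℝ) ^ 2 ^ (N + 1) = 2 ^ 2 ^ N * 2 ^ 2 ^ N := by rw [pow_succ, pow_mul, sq]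
    rw [Finset.sum_range_succ]
    nlinarith

lemma tsum_nat_add_add_one_rpow_neg_le {q : ℝ} (hq : 1 < q) (N : ℕ) :
    ∑' k : ℕ, (((k + N : ℕ) : ℝ) + 1) ^ (-q) ≤ q / (q - 1) * ((N : ℝ) + 1) ^ (1 - q) := by
  set f : ℝ → ℝ := fun x ↦ x ^ (-q)
  have hsum : Summable fun k : ℕ ↦ f ((k + N : ℕ) + 1) := by
    have := (summable_nat_add_iff (N + 1)).mpr (Real.summable_nat_rpow.mpr (by linarith : -q < -1))
    simpa [f, add_assoc] using this
  have hint : ∑' k : ℕ, f ↑(k + (N + 1) + 1) ≤ ((N : ℝ) + 1) ^ (1 - q) / (q - 1) := by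
    refine (AntitoneOn.tsum_comp_add_le_integral (N + 1) ?_
      (integrableOn_Ioi_rpow_of_lt (by linarith) (by positivity))
      fun x hx ↦ Real.rpow_nonneg ((lt_trans (by positivity) hx).le) _).trans_eq ?_
    · intro x hx y _ hxy
      exact Real.rpow_le_rpow_of_nonpos (lt_of_lt_of_le (by positivity) hx) hxy (by linarith)
    · rw [integral_Ioi_rpow_of_lt (by linarith) (by positivity)]
      push_cast
      rw [show -q + 1 = 1 - q by ring, neg_div, ← div_neg, neg_sub]
  have hfirst : f ((N : ℝ) + 1) ≤ ((N : ℝ) + 1) ^ (1 - q) :=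
    Real.rpow_le_rpow_of_exponent_le (by linarith [(N.cast_nonneg : (0 : ℝ) ≤ N)]) (by linarith)
  -- The first term is split off so that the integral runs over `(N + 1, ∞)`, away from `0`.
  rw [hsum.tsum_eq_zero_add]
  have hq1 : (0 : ℝ) < q - 1 := by linarith
  calc f ((0 + N : ℕ) + 1) + ∑' k : ℕ, f ((k + 1 + N : ℕ) + 1)
      ≤ ((N : ℝ) + 1) ^ (1 - q) + ((N : ℝ) + 1) ^ (1 - q) / (q - 1) := by
        gcongr
        · simpa using hfirst
        · refine (tsum_congr fun k ↦ ?_).trans_le hint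
          congr 1
          push_cast
          ring
    _ = q / (q - 1) * ((N : ℝ) + 1) ^ (1 - q) := by field_simp; ring

lemma exp_neg_mul_le_mul_rpow_neg {x p ε : ℝ} (hx : 0 < x) (hp : 0 < p) (hε : 0 < ε) :
    Real.exp (-(ε * x)) ≤ (p / ε) ^ p * x ^ (-p) := by
  have hlin : ε * x / p ≤ Real.exp (ε * x / p) := by linarith [Real.add_one_le_exp (ε * x / p)]
  have hpow : x ^ p ≤ (p / ε) ^ p * Real.exp (ε * x) :=
    calc x ^ p = (p / ε) ^ p * (ε * x / p) ^ p := by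
          rw [← Real.mul_rpow (by positivity) (by positivity)]
          congr 1
          field_simp
      _ ≤ (p / ε) ^ p * Real.exp (ε * x / p) ^ p := by
          have : 0 ≤ ε * x / p := by positivity
          gcongr
      _ = (p / ε) ^ p * Real.exp (ε * x) := by
          rw [← Real.exp_mul, div_mul_cancel₀ _ hp.ne']
  rw [Real.exp_neg, Real.rpow_neg hx.le, ← div_eq_mul_inv, le_div_iff₀ (by positivity),
    inv_mul_le_iff₀ (Real.exp_pos _)]
  linarith

lemma modCont_le {f : ℝ → ℂ} {δ B : ℝ} (hB : 0 ≤ B)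
    (hf : ∀ t h, |h| ≤ δ → ‖f (t + h) - f t‖ ≤ B) : modCont f δ ≤ B :=
  Real.sSup_le (by rintro _ ⟨t, h, hh, rfl⟩; exact hf t h hh) hB

lemma superlacFun_eq_trigSeries (Δ : ℝ) :
    superlacFun Δ = trigSeries (fun k ↦ ((k : ℝ) + 1) ^ (-(2 * Δ))) (fun k ↦ 2 ^ 2 ^ (k + 1)) := by
  ext1 t
  simp only [superlacFun, trigSeries]
  push_cast
  rfl

lemma norm_superlacFun_add_sub_le {Δ : ℝ} (hΔ : 1 / 2 < Δ) (t h : ℝ) (N : ℕ) :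
    ‖superlacFun Δ (t + h) - superlacFun Δ t‖ ≤
      2 * 2 ^ 2 ^ N * |h| + 2 * (2 * Δ / (2 * Δ - 1) * ((N : ℝ) + 1) ^ (1 - 2 * Δ)) := by
  have hc : Summable fun k : ℕ ↦ ((k : ℝ) + 1) ^ (-(2 * Δ)) := by
    simpa using (summable_nat_add_iff 1).mpr (Real.summable_nat_rpow.mpr (by linarith))
  rw [superlacFun_eq_trigSeries]
  refine (trigSeries.norm_add_sub_le (fun k ↦ by positivity) hc t h N).trans ?_
  have hhead : ∑ k ∈ Finset.range N, ((k : ℝ) + 1) ^ (-(2 * Δ)) * |(2 : ℝ) ^ 2 ^ (k + 1)| ≤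
      2 * 2 ^ 2 ^ N := by
    refine le_trans (Finset.sum_le_sum fun k _ ↦ ?_) (sum_range_two_pow_two_pow_le N)
    rw [abs_of_nonneg (by positivity)]
    exact mul_le_of_le_one_left (by positivity)
      (Real.rpow_le_one_of_one_le_of_nonpos (by linarith [k.cast_nonneg (α := ℝ)]) (by linarith))
  rw [mul_comm (2 * 2 ^ 2 ^ N : ℝ)]
  gcongr
  exact tsum_nat_add_add_one_rpow_neg_le (by linarith) N

lemma exists_two_pow_le_half_and_log_le {L : ℝ} (hL : 2 ≤ L) :
    ∃ N : ℕ, (2 : ℝ) ^ N ≤ L / 2 ∧ Real.log L ≤ 2 * (N + 1) := by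
  obtain ⟨N, hN, hNL⟩ := exists_nat_pow_near (x := L / 2) (by linarith) one_lt_two
  refine ⟨N, hN, ?_⟩
  have : Real.log L < (N + 2) * Real.log 2 := by
    rw [← Real.log_rpow two_pos]
    refine Real.log_lt_log (by linarith) ?_
    rw [show (N : ℝ) + 2 = ((N + 2 : ℕ) : ℝ) by push_cast; ring, Real.rpow_natCast, pow_succ]
    linarith
  nlinarith [Real.log_le_sub_one_of_pos two_pos, N.cast_nonneg (α := ℝ)]

lemma two_pow_two_pow_mul_exp_neg_le {N : ℕ} {L p : ℝ} (hp : 0 < p) (hL : 1 < L)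
    (hN : (2 : ℝ) ^ N ≤ L / 2) :
    2 ^ 2 ^ N * Real.exp (-L) ≤ (2 * p) ^ p * Real.log L ^ (-p) :=
  calc 2 ^ 2 ^ N * Real.exp (-L) ≤ Real.exp (2 ^ N) * Real.exp (-L) := by
        have h2e : (2 : ℝ) ≤ Real.exp 1 := by linarith [Real.add_one_le_exp 1]
        gcongr
        simpa [Real.exp_one_pow] using pow_le_pow_left₀ zero_le_two h2e (2 ^ N)
    _ ≤ Real.exp (-(1 / 2 * L)) := by
        rw [← Real.exp_add]
        exact Real.exp_le_exp.mpr (by linarith)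
    _ ≤ (2 * p) ^ p * L ^ (-p) := by
        convert exp_neg_mul_le_mul_rpow_neg (x := L) (by linarith) hp one_half_pos using 3
        ring
    _ ≤ (2 * p) ^ p * Real.log L ^ (-p) :=
        mul_le_mul_of_nonneg_left (Real.rpow_le_rpow_of_nonpos (Real.log_pos hL)
          (Real.log_le_self (by linarith)) (by linarith)) (by positivity)

lemma rpow_neg_le_two_rpow_mul_rpow_neg {x y p : ℝ} (hy : 0 < y) (hyx : y ≤ 2 * x) (hp : 0 ≤ p) :
    x ^ (-p) ≤ 2 ^ p * y ^ (-p) :=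
  calc x ^ (-p) = 2 ^ p * (2 * x) ^ (-p) := by
        rw [Real.mul_rpow zero_le_two (by linarith), Real.rpow_neg zero_le_two,
          mul_inv_cancel_left₀ (by positivity)]
    _ ≤ 2 ^ p * y ^ (-p) :=
        mul_le_mul_of_nonneg_left (Real.rpow_le_rpow_of_nonpos hy hyx (by linarith))
          (by positivity)

noncomputable def superlacModContConst (Δ : ℝ) : ℝ :=
  2 * (2 * (2 * Δ - 1)) ^ (2 * Δ - 1) + 2 * (2 * Δ / (2 * Δ - 1)) * 2 ^ (2 * Δ - 1)

lemma superlacModContConst_pos {Δ : ℝ} (hΔ : 1 / 2 < Δ) : 0 < superlacModContConst Δ := by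
  have : 0 < 2 * Δ - 1 := by linarith
  unfold superlacModContConst
  positivity

lemma norm_superlacFun_add_sub_le_of_le_exp_neg {Δ L : ℝ} (hΔ : 1 / 2 < Δ) (hL : 2 ≤ L)
    {t h : ℝ} (hh : |h| ≤ Real.exp (-L)) :
    ‖superlacFun Δ (t + h) - superlacFun Δ t‖ ≤
      superlacModContConst Δ * Real.log L ^ (1 - 2 * Δ) := by
  obtain ⟨N, hN, hLN⟩ := exists_two_pow_le_half_and_log_le hL
  set p := 2 * Δ - 1
  have hp : 0 < p := by linarith
  have hhead : 2 ^ 2 ^ N * |h| ≤ (2 * p) ^ p * Real.log L ^ (-p) :=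
    (mul_le_mul_of_nonneg_left hh (by positivity)).trans
      (two_pow_two_pow_mul_exp_neg_le hp (by linarith) hN)
  have htail : ((N : ℝ) + 1) ^ (-p) ≤ 2 ^ p * Real.log L ^ (-p) :=
    rpow_neg_le_two_rpow_mul_rpow_neg (Real.log_pos (by linarith)) hLN hp.le
  rw [show 1 - 2 * Δ = -p by ring]
  calc ‖superlacFun Δ (t + h) - superlacFun Δ t‖
      ≤ 2 * 2 ^ 2 ^ N * |h| + 2 * (2 * Δ / p * ((N : ℝ) + 1) ^ (-p)) := by
        simpa only [show 1 - 2 * Δ = -p by ring] using norm_superlacFun_add_sub_le hΔ t h N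
    _ ≤ 2 * ((2 * p) ^ p * Real.log L ^ (-p)) + 2 * (2 * Δ / p * (2 ^ p * Real.log L ^ (-p))) := by
        rw [mul_assoc]
        gcongr
    _ = superlacModContConst Δ * Real.log L ^ (-p) := by
        unfold superlacModContConst
        ring

/-- Example 2.2, upper bound:
`ω[s](δ) ≤ C₄ (ln |ln δ|)^{1-2Δ}` for `0 < δ < e^{-e}`. -/
theorem superlacFun_modCont_upper (Δ : ℝ) (hΔ : 1 < Δ) :
    ∃ C₄ : ℝ, 0 < C₄ ∧ ∀ δ : ℝ, δ ∈ Set.Ioo (0 : ℝ) (Real.exp (-(Real.exp 1))) →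
      modCont (superlacFun Δ) δ ≤ C₄ * Real.log |Real.log δ| ^ (1 - 2 * Δ) := by
  have hΔ' : 1 / 2 < Δ := by linarith
  refine ⟨superlacModContConst Δ, superlacModContConst_pos hΔ', ?_⟩
  rintro δ ⟨hδ0, hδ⟩
  have hL : 2 < -Real.log δ := by
    have := Real.log_lt_log hδ0 hδ
    rw [Real.log_exp] at this
    linarith [Real.add_one_le_exp 1]
  rw [abs_of_neg (by linarith : Real.log δ < 0)]
  refine modCont_le ?_ fun t h hh ↦
    norm_superlacFun_add_sub_le_of_le_exp_neg hΔ' hL.le (by rwa [neg_neg, Real.exp_log hδ0])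
  exact mul_nonneg (superlacModContConst_pos hΔ').le
    (Real.rpow_nonneg (Real.log_nonneg (by linarith)) _)
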